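/- Let R^(0), R^(1), …, R^(N) be i.i.d. continuous real-valued random variables and let δ ∈ (0,1) with ⌈(N+1)(1-δ)⌉ ≤ N. Setting C equal to the ⌈(N+1)(1-δ)⌉-th order statistic of R^(1), …, R^(N), we have P(R^(0) ≤ C) ≥ 1 - δ. -/

import Mathlib

open MeasureTheory ProbabilityTheory
open scoped ENNReal

/-- The `K`-th order statistic (1-indexed) of a finite family of reals. -/
noncomputable def orderStat {n : ℕ} (K : ℕ) (f : Fin n → ℝ) : ℝ :=
  ((Finset.univ.val.map f).sort (· ≤ ·)).getD (K - 1) 0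

section Aux

lemma sorted_le_getD_iff (l : List ℝ) (hs : l.Pairwise (· ≤ ·)) (K : ℕ) (hK1 : 1 ≤ K)
    (hKn : K ≤ l.length) (x : ℝ) :
    x ≤ l.getD (K-1) 0 ↔ l.countP (fun a => decide (a < x)) < K := by
  have hlt : K - 1 < l.length := by omega
  rw [List.getD_eq_getElem l 0 hlt]
  constructor
  · intro hx
    have hsplit := List.take_append_drop (K-1) l
    have hcnt : l.countP (fun a => decide (a < x)) =
        (l.take (K-1)).countP (fun a => decide (a < x)) +
        (l.drop (K-1)).countP (fun a => decide (a < x)) := by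
      conv_lhs => rw [← hsplit]
      rw [List.countP_append]
    rw [hcnt]
    have h1 : (l.take (K-1)).countP (fun a => decide (a < x)) ≤ K - 1 :=
      le_trans List.countP_le_length (by simp)
    have h2 : (l.drop (K-1)).countP (fun a => decide (a < x)) = 0 := by
      rw [List.countP_eq_zero]
      intro a ha
      obtain ⟨j, hj, rfl⟩ := List.getElem_of_mem ha
      have hjl : K - 1 + j < l.length := by
        have := hj; rw [List.length_drop] at this; omega
      rw [List.getElem_drop]
      have hle : l[K-1] ≤ l[K-1+j] :=
        hs.rel_get_of_le (a := ⟨K-1, hlt⟩) (b := ⟨K-1+j, hjl⟩)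
          (Fin.mk_le_mk.2 (Nat.le_add_right _ _))
      simpa using not_lt.2 (le_trans hx hle)
    omega
  · intro hc
    by_contra hx
    push_neg at hx
    have hKl : (l.take K).countP (fun a => decide (a < x)) = K := by
      rw [List.countP_eq_length.2, List.length_take, min_eq_left hKn]
      intro a ha
      obtain ⟨j, hj, rfl⟩ := List.getElem_of_mem ha
      have hjK : j < K := by have := hj; rw [List.length_take] at this; omega
      have hjl : j < l.length := by omega
      rw [List.getElem_take]
      have hle : l[j] ≤ l[K-1] := by
        rcases Nat.lt_or_ge j (K-1) with h | h
        · exact hs.rel_get_of_lt (a := ⟨j, hjl⟩) (b := ⟨K-1, hlt⟩) h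
        · have hj' : j = K - 1 := by omega
          subst hj'; exact le_rfl
      simp only [decide_eq_true_iff]
      exact lt_of_le_of_lt hle hx
    have : (l.take K).countP (fun a => decide (a < x)) ≤ l.countP (fun a => decide (a < x)) :=
      (List.take_sublist K l).countP_le
    omega

open Finset in
lemma le_orderStat_iff {n K : ℕ} (hK1 : 1 ≤ K) (hKn : K ≤ n) (y : Fin n → ℝ) (x : ℝ) :
    x ≤ orderStat K y ↔ (Finset.univ.filter (fun i => y i < x)).card < K := by
  set l := ((Finset.univ.val.map y).sort (· ≤ ·)) with hl
  have hlen : l.length = n := by simp [hl]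
  have hs : l.Pairwise (· ≤ ·) := Multiset.pairwise_sort _ _
  rw [orderStat, ← hl, sorted_le_getD_iff l hs K hK1 (by omega) x]
  have : l.countP (fun a => decide (a < x)) = (Finset.univ.filter (fun i => y i < x)).card := by
    have h1 : l.countP (fun a => decide (a < x)) =
        Multiset.countP (fun a => a < x) (Finset.univ.val.map y) := by
      rw [hl, ← Multiset.coe_countP]
      congr 1
      exact Multiset.sort_eq _ _
    rw [h1, Multiset.countP_map]
    rw [Finset.card_def, Finset.filter_val]
  rw [this]

variable {Ω : Type*} [MeasureSpace Ω] [IsProbabilityMeasure (ℙ : Measure Ω)]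
variable {ι : Type*} [Fintype ι] [DecidableEq ι]

lemma map_eq_pi (R : ι → Ω → ℝ) (hmeas : ∀ i, Measurable (R i))
    (μ : Measure ℝ) [IsProbabilityMeasure μ]
    (hident : ∀ i, Measure.map (R i) ℙ = μ)
    (hindep : iIndepFun R ℙ) :
    Measure.map (fun ω i => R i ω) ℙ = Measure.pi (fun _ : ι => μ) := by
  refine (Measure.pi_eq fun s hs => ?_).symm
  rw [Measure.map_apply (measurable_pi_lambda _ hmeas) (MeasurableSet.univ_pi hs)]
  have hpre : (fun ω i => R i ω) ⁻¹' (Set.pi Set.univ s) = ⋂ i ∈ Finset.univ, R i ⁻¹' s i := by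
    ext ω; simp [Set.mem_pi]
  rw [hpre, hindep.measure_inter_preimage_eq_mul Finset.univ (fun i _ => hs i)]
  refine Finset.prod_congr rfl fun i _ => ?_
  rw [← hident i, Measure.map_apply (hmeas i) (hs i)]

omit [MeasureSpace Ω] in
lemma pi_map_pair (μ : Measure ℝ) [IsProbabilityMeasure μ]
    (i j : ι) (hij : i ≠ j) :
    (Measure.pi (fun _ : ι => μ)).map (fun x => (x i, x j)) = μ.prod μ := by
  refine (Measure.prod_eq fun s t hs ht => ?_).symm
  rw [Measure.map_apply (by fun_prop) (hs.prod ht)]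
  have hpre : (fun x : ι → ℝ => (x i, x j)) ⁻¹' (s ×ˢ t) =
      Set.pi Set.univ (fun k => if k = i then s else if k = j then t else Set.univ) := by
    ext x
    simp only [Set.mem_preimage, Set.mem_prod, Set.mem_pi, Set.mem_univ, true_implies]
    constructor
    · rintro ⟨h1, h2⟩ k
      rcases eq_or_ne k i with rfl | hki
      · simpa using h1
      · rcases eq_or_ne k j with rfl | hkj
        · simpa [hki] using h2
        · simp [hki, hkj]
    · intro h
      refine ⟨?_, ?_⟩
      · have := h i; simpa using this
      · have := h j; simpa [Ne.symm hij] using this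
  rw [hpre, Measure.pi_pi]
  rw [← Finset.prod_subset (Finset.subset_univ {i, j}) (by
    intro k _ hk
    simp only [Finset.mem_insert, Finset.mem_singleton, not_or] at hk
    simp [hk.1, hk.2])]
  rw [Finset.prod_pair hij]
  simp [hij, Ne.symm hij]

omit [MeasureSpace Ω] in
lemma ties_null (μ : Measure ℝ) [IsProbabilityMeasure μ]
    (hcont : ∀ x : ℝ, μ {x} = 0) (i j : ι) (hij : i ≠ j) :
    Measure.pi (fun _ : ι => μ) {x | x i = x j} = 0 := by
  have hd : MeasurableSet {p : ℝ × ℝ | p.1 = p.2} :=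
    measurableSet_eq_fun measurable_fst measurable_snd
  have h0 : {x : ι → ℝ | x i = x j} = (fun x => (x i, x j)) ⁻¹' {p : ℝ × ℝ | p.1 = p.2} := rfl
  rw [h0, ← Measure.map_apply (by fun_prop) hd, pi_map_pair μ i j hij]
  rw [Measure.prod_apply hd]
  have h1 : ∀ a : ℝ, (Prod.mk a ⁻¹' {p : ℝ × ℝ | p.1 = p.2}) = {a} := by
    intro a; ext b; simp [eq_comm]
  simp only [h1, hcont]
  simp

open Finset in
/-- count of entries strictly below entry `j` -/
noncomputable def cnt (x : ι → ℝ) (j : ι) : ℕ := (univ.filter (fun i => x i < x j)).card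

open Finset in
lemma cnt_comp_perm (x : ι → ℝ) (σ : Equiv.Perm ι) (j : ι) :
    cnt (x ∘ σ) j = cnt x (σ j) := by
  unfold cnt
  exact Finset.card_equiv σ (fun i => by simp)

open Finset in
lemma cnt_inj {x : ι → ℝ} (hx : Function.Injective x) :
    Function.Injective (cnt x) := by
  have key : ∀ a b : ι, x a < x b → cnt x a < cnt x b := by
    intro a b hab
    apply Finset.card_lt_card
    rw [Finset.ssubset_iff_of_subset]
    · exact ⟨a, by simp [hab], by simp⟩
    · intro i hi
      simp only [Finset.mem_filter, Finset.mem_univ, true_and] at hi ⊢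
      exact lt_trans hi hab
  intro a b hab
  by_contra hne
  rcases lt_trichotomy (x a) (x b) with h | h | h
  · exact absurd hab (Nat.ne_of_lt (key _ _ h))
  · exact hne (hx h)
  · exact absurd hab.symm (Nat.ne_of_lt (key _ _ h))

open Finset in
lemma cnt_image {x : ι → ℝ} (hx : Function.Injective x) :
    univ.image (cnt x) = Finset.range (Fintype.card ι) := by
  refine Finset.eq_of_subset_of_card_le ?_ ?_
  · intro r hr
    simp only [Finset.mem_image] at hr
    obtain ⟨j, _, rfl⟩ := hr
    rw [Finset.mem_range]
    calc cnt x j ≤ (univ.erase j).card := Finset.card_le_card (by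
          intro i hi
          simp only [cnt, Finset.mem_filter] at hi
          simp only [Finset.mem_erase, Finset.mem_univ, and_true]
          exact fun h => absurd hi.2 (by rw [h]; exact lt_irrefl _))
      _ < Fintype.card ι := by
          rw [Finset.card_erase_of_mem (Finset.mem_univ j), Finset.card_univ]
          have : 0 < Fintype.card ι := Fintype.card_pos_iff.2 ⟨j⟩
          omega
  · rw [Finset.card_range, Finset.card_image_of_injective _ (cnt_inj hx), Finset.card_univ]

open Finset in
lemma cnt_exists {x : ι → ℝ} (hx : Function.Injective x) {r : ℕ} (hr : r < Fintype.card ι) :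
    ∃ j, cnt x j = r := by
  have h := cnt_image hx
  have hrmem : r ∈ Finset.range (Fintype.card ι) := Finset.mem_range.2 hr
  rw [← h] at hrmem
  simpa using hrmem

lemma pi_perm (μ : Measure ℝ) [IsProbabilityMeasure μ] (σ : Equiv.Perm ι) :
    MeasurePreserving (fun x : ι → ℝ => x ∘ σ)
      (Measure.pi fun _ : ι => μ) (Measure.pi fun _ : ι => μ) := by
  have h := measurePreserving_piCongrLeft (fun _ : ι => μ) σ.symm
  have hfun : ⇑(MeasurableEquiv.piCongrLeft (fun _ : ι => ℝ) σ.symm)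
      = fun x : ι → ℝ => x ∘ σ := by
    funext x
    funext i
    rw [MeasurableEquiv.coe_piCongrLeft]
    have h2 := Equiv.piCongrLeft_apply_apply (fun _ : ι => ℝ) σ.symm x (σ i)
    simpa using h2
  rw [hfun] at h
  exact h

lemma cnt_measurable (j : ι) : Measurable (fun x : ι → ℝ => cnt x j) := by
  have h : (fun x : ι → ℝ => cnt x j)
      = fun x => ∑ i : ι, if x i < x j then 1 else 0 := by
    funext x
    exact Finset.card_filter _ _
  rw [h]
  exact Finset.measurable_sum _ fun i _ =>
    Measurable.ite (measurableSet_lt (measurable_pi_apply i) (measurable_pi_apply j))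
      measurable_const measurable_const

end Aux

theorem stmt_2
    {Ω : Type*} [MeasureSpace Ω] [IsProbabilityMeasure (ℙ : Measure Ω)]
    (N : ℕ) (R : Fin (N + 1) → Ω → ℝ) (hmeas : ∀ i, Measurable (R i))
    (μ : Measure ℝ) [IsProbabilityMeasure μ]
    (hident : ∀ i, Measure.map (R i) ℙ = μ)
    (hindep : iIndepFun R ℙ)
    (hcont : ∀ x : ℝ, μ {x} = 0)
    (δ : ℝ) (hδ0 : 0 < δ) (hδ1 : δ < 1)
    (hK : ⌈((N : ℝ) + 1) * (1 - δ)⌉₊ ≤ N) :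
    ℙ {ω | R 0 ω ≤ orderStat ⌈((N : ℝ) + 1) * (1 - δ)⌉₊ (fun i : Fin N => R i.succ ω)}
      ≥ ENNReal.ofReal (1 - δ) := by
  classical
  set K := ⌈((N : ℝ) + 1) * (1 - δ)⌉₊ with hKdef
  have hK1 : 1 ≤ K := Nat.one_le_ceil_iff.2 (by nlinarith)
  set π := Measure.pi (fun _ : Fin (N+1) => μ) with hπ
  haveI : IsProbabilityMeasure π := by rw [hπ]; infer_instance
  -- the no-ties set
  set T : Set (Fin (N+1) → ℝ) := {x | Function.Injective x} with hT
  have hTc : Tᶜ = ⋃ (i) (j) (_ : i ≠ j), {x : Fin (N+1) → ℝ | x i = x j} := by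
    ext x
    simp only [hT, Set.mem_compl_iff, Set.mem_setOf_eq, Set.mem_iUnion, Function.Injective]
    push_neg
    constructor
    · rintro ⟨i, j, hij, hne⟩; exact ⟨i, j, hne, hij⟩
    · rintro ⟨i, j, hne, hij⟩; exact ⟨i, j, hij, hne⟩
  have hTm : MeasurableSet T := by
    rw [← compl_compl T, hTc]
    exact (MeasurableSet.iUnion fun i => MeasurableSet.iUnion fun j =>
      MeasurableSet.iUnion fun _ =>
        measurableSet_eq_fun (measurable_pi_apply i) (measurable_pi_apply j)).compl
  have hTnull : π Tᶜ = 0 := by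
    rw [hTc]
    exact measure_iUnion_null fun i => measure_iUnion_null fun j =>
      measure_iUnion_null fun hij => ties_null μ hcont i j hij
  have hTone : π T = 1 := by
    have h := measure_add_measure_compl (μ := π) hTm
    rw [hTnull, add_zero] at h
    rw [h]; exact measure_univ
  -- each rank value has probability 1/(N+1)
  have hrank : ∀ r : ℕ, r < N + 1 → π {x | cnt x 0 = r} = ((N : ℝ≥0∞) + 1)⁻¹ := by
    intro r hr
    set E : Fin (N+1) → Set (Fin (N+1) → ℝ) := fun j => {x | cnt x j = r} ∩ T with hE
    have hEm : ∀ j, MeasurableSet (E j) := fun j =>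
      ((cnt_measurable j) (measurableSet_singleton r)).inter hTm
    have hEeq : ∀ j, π (E j) = π (E 0) := by
      intro j
      have hmp := pi_perm (ι := Fin (N+1)) μ (Equiv.swap 0 j)
      have hpre : (fun x : Fin (N+1) → ℝ => x ∘ (Equiv.swap 0 j)) ⁻¹' (E 0) = E j := by
        ext x
        simp only [hE, Set.mem_preimage, Set.mem_inter_iff, Set.mem_setOf_eq]
        rw [cnt_comp_perm x (Equiv.swap 0 j) 0, Equiv.swap_apply_left]
        have hinj : Function.Injective (x ∘ (Equiv.swap 0 j)) ↔ Function.Injective x :=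
          Equiv.injective_comp _ _
        rw [show (x ∘ (Equiv.swap 0 j) ∈ T) ↔ Function.Injective (x ∘ (Equiv.swap 0 j)) from
          Iff.rfl, hinj]
        exact Iff.rfl
      rw [← hpre, hmp.measure_preimage (hEm 0).nullMeasurableSet]
    have hdisj : (↑(Finset.univ : Finset (Fin (N+1))) : Set (Fin (N+1))).PairwiseDisjoint E := by
      intro a _ b _ hab
      simp only [Function.onFun, Set.disjoint_left]
      intro x hxa hxb
      simp only [hE, Set.mem_inter_iff, Set.mem_setOf_eq] at hxa hxb
      exact hab (cnt_inj hxa.2 (hxa.1.trans hxb.1.symm))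
    have hcover : (⋃ j ∈ (Finset.univ : Finset (Fin (N+1))), E j) = T := by
      apply Set.Subset.antisymm
      · refine Set.iUnion₂_subset fun j _ => ?_
        simp [hE, Set.inter_subset_right]
      · intro x hx
        obtain ⟨j, hj⟩ := cnt_exists (x := x) hx (by simpa using hr)
        exact Set.mem_biUnion (Finset.mem_univ j) ⟨hj, hx⟩
    have hsum : ∑ j : Fin (N+1), π (E j) = 1 := by
      rw [← measure_biUnion_finset hdisj (fun j _ => hEm j), hcover, hTone]
    have hsum2 : ((N : ℝ≥0∞) + 1) * π (E 0) = 1 := by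
      calc ((N : ℝ≥0∞) + 1) * π (E 0) = ((N + 1 : ℕ) : ℝ≥0∞) * π (E 0) := by push_cast; ring
        _ = ∑ _j : Fin (N+1), π (E 0) := by
            rw [Finset.sum_const, Finset.card_univ, Fintype.card_fin, nsmul_eq_mul]
        _ = ∑ j : Fin (N+1), π (E j) := by
            exact Finset.sum_congr rfl fun j _ => (hEeq j).symm
        _ = 1 := hsum
    have hE0 : π (E 0) = ((N : ℝ≥0∞) + 1)⁻¹ :=
      ENNReal.eq_inv_of_mul_eq_one_left (by rw [mul_comm] at hsum2; exact hsum2)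
    rw [← measure_inter_conull (s := {x | cnt x 0 = r}) hTnull]
    exact hE0
  -- the event as a preimage
  have hKN : K ≤ N := hK
  have hcard : ∀ x : Fin (N+1) → ℝ,
      (Finset.univ.filter (fun i : Fin N => x i.succ < x 0)).card = cnt x 0 := by
    intro x
    unfold cnt
    refine Finset.card_bij' (fun a _ => a.succ)
      (fun b hb => b.pred (by
        intro h0
        subst h0
        simp only [Finset.mem_filter] at hb
        exact lt_irrefl _ hb.2)) ?_ ?_ ?_ ?_
    · intro a ha
      simp only [Finset.mem_filter, Finset.mem_univ, true_and] at ha ⊢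
      exact ha
    · intro b hb
      simp only [Finset.mem_filter, Finset.mem_univ, true_and] at hb ⊢
      rwa [Fin.succ_pred]
    · intro a _; exact Fin.pred_succ _
    · intro b _; exact Fin.succ_pred _ _
  set S : Set (Fin (N+1) → ℝ) := {x | cnt x 0 < K} with hS
  have hSm : MeasurableSet S := (cnt_measurable 0) measurableSet_Iio
  have hset : {ω | R 0 ω ≤ orderStat K (fun i : Fin N => R i.succ ω)}
      = (fun ω i => R i ω) ⁻¹' S := by
    ext ω
    simp only [Set.mem_setOf_eq, Set.mem_preimage, hS]
    rw [le_orderStat_iff hK1 hKN (fun i => R i.succ ω) (R 0 ω)]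
    rw [hcard (fun i => R i ω)]
  rw [hset, ← Measure.map_apply (measurable_pi_lambda _ hmeas) hSm,
    map_eq_pi R hmeas μ hident hindep, ← hπ]
  -- compute π S
  have hSunion : S = ⋃ r ∈ Finset.range K, {x : Fin (N+1) → ℝ | cnt x 0 = r} := by
    ext x
    simp only [hS, Set.mem_setOf_eq, Set.mem_iUnion, Finset.mem_range, exists_prop]
    exact ⟨fun h => ⟨cnt x 0, h, rfl⟩, fun ⟨r, hr, he⟩ => he ▸ hr⟩
  have hSdisj : (↑(Finset.range K) : Set ℕ).PairwiseDisjoint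
      (fun r => {x : Fin (N+1) → ℝ | cnt x 0 = r}) := by
    intro a _ b _ hab
    simp only [Function.onFun, Set.disjoint_left]
    intro x hxa hxb
    exact hab (hxa.symm.trans hxb)
  have hSmeas : ∀ r ∈ Finset.range K, MeasurableSet {x : Fin (N+1) → ℝ | cnt x 0 = r} :=
    fun r _ => (cnt_measurable 0) (measurableSet_singleton r)
  have hπS : π S = K * ((N : ℝ≥0∞) + 1)⁻¹ := by
    rw [hSunion, measure_biUnion_finset hSdisj hSmeas]
    have : ∀ r ∈ Finset.range K, π {x : Fin (N+1) → ℝ | cnt x 0 = r}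
        = ((N : ℝ≥0∞) + 1)⁻¹ := by
      intro r hr
      exact hrank r (by have := Finset.mem_range.1 hr; omega)
    rw [Finset.sum_congr rfl this, Finset.sum_const, Finset.card_range, nsmul_eq_mul]
  rw [hπS]
  -- final arithmetic
  have hle : ((N : ℝ) + 1) * (1 - δ) ≤ (K : ℝ) := Nat.le_ceil _
  have hpos : (0 : ℝ) < (N : ℝ) + 1 := by positivity
  calc ENNReal.ofReal (1 - δ)
      = ENNReal.ofReal ((((N : ℝ) + 1) * (1 - δ)) / ((N : ℝ) + 1)) := by
        congr 1
        field_simp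
    _ ≤ ENNReal.ofReal ((K : ℝ) / ((N : ℝ) + 1)) :=
        ENNReal.ofReal_le_ofReal (by gcongr)
    _ = (K : ℝ≥0∞) * ((N : ℝ≥0∞) + 1)⁻¹ := by
        rw [ENNReal.ofReal_div_of_pos hpos, ENNReal.ofReal_natCast, div_eq_mul_inv]
        congr 1
        rw [show ((N : ℝ) + 1) = ((N + 1 : ℕ) : ℝ) by push_cast; ring,
          ENNReal.ofReal_natCast]
        push_cast; ring
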